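/- arXiv:1709.00530 — 4 statements merged into one kernel-verified Lean document; each statement's English description precedes it below -/
import Mathlib

section
/- Let (X, d) be a metric space with a Borel probability measure μ, and let T : X → X be measurable and μ-preserving. Suppose W : X → Set X is a family of sets (the 'local stable manifolds') such that x ∈ W(x) for all x, and there exist C₁ > 0 and τ₁ ∈ (0,1) with dist(T^n x, T^n y) ≤ C₁ τ₁^n for every x, every y ∈ W(x), and every n ≥ 0. Let D ⊆ X be a set for which there exists C₂ > 0 such that μ(thickening_ε(∂D)) ≤ C₂ ε for all ε > 0, where ∂D is the topological boundary of D and thickening_ε denotes the open ε-neighborhood. Then there exists C > 0 such that for every k ≥ 0, the set H_k(D) = {x ∈ D : T^k(W(x)) ∩ ∂D ≠ ∅} satisfies μ*(H_k(D)) ≤ C τ₁^k (outer measure, or measure if H_k(D) is measurable). -/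
open MeasureTheory Filter Set

/-- Annulus estimate: the set of points of `D` whose local stable manifold, pushed forward
`k` times, crosses the boundary of `D` has measure `O(τ₁^k)`. -/
theorem stmt1
    {X : Type*} [MetricSpace X] [MeasurableSpace X] [BorelSpace X]
    (μ : Measure X) [IsProbabilityMeasure μ]
    (T : X → X) (hT : Measurable T) (hTμ : MeasurePreserving T μ μ)
    (W : X → Set X) (hWx : ∀ x, x ∈ W x)
    (C₁ τ₁ : ℝ) (hC₁ : 0 < C₁) (hτ₁ : τ₁ ∈ Set.Ioo (0 : ℝ) 1)
    (hcontr : ∀ x, ∀ y ∈ W x, ∀ n : ℕ, dist (T^[n] x) (T^[n] y) ≤ C₁ * τ₁ ^ n)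
    (D : Set X) (C₂ : ℝ) (hC₂ : 0 < C₂)
    (hbd : ∀ ε : ℝ, 0 < ε →
      μ (Metric.thickening ε (frontier D)) ≤ ENNReal.ofReal (C₂ * ε)) :
    ∃ C : ℝ, 0 < C ∧ ∀ k : ℕ,
      μ {x | x ∈ D ∧ ((T^[k]) '' (W x) ∩ frontier D).Nonempty}
        ≤ ENNReal.ofReal (C * τ₁ ^ k) := by
  refine ⟨2 * C₁ * C₂, by positivity, fun k => ?_⟩
  have hτpos : 0 < τ₁ ^ k := pow_pos hτ₁.1 k
  have hεpos : 0 < 2 * C₁ * τ₁ ^ k := by positivity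
  have hsub : {x | x ∈ D ∧ ((T^[k]) '' (W x) ∩ frontier D).Nonempty}
      ⊆ (T^[k]) ⁻¹' Metric.thickening (2 * C₁ * τ₁ ^ k) (frontier D) := by
    rintro x ⟨-, z, ⟨y, hyW, rfl⟩, hzD⟩
    refine Metric.mem_thickening_iff.2 ⟨T^[k] y, hzD, ?_⟩
    calc dist (T^[k] x) (T^[k] y) ≤ C₁ * τ₁ ^ k := hcontr x y hyW k
      _ < 2 * C₁ * τ₁ ^ k := by nlinarith
  calc μ {x | x ∈ D ∧ ((T^[k]) '' (W x) ∩ frontier D).Nonempty}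
      ≤ μ ((T^[k]) ⁻¹' Metric.thickening (2 * C₁ * τ₁ ^ k) (frontier D)) :=
        measure_mono hsub
    _ = μ (Metric.thickening (2 * C₁ * τ₁ ^ k) (frontier D)) :=
        (hTμ.iterate k).measure_preimage
          Metric.isOpen_thickening.measurableSet.nullMeasurableSet
    _ ≤ ENNReal.ofReal (C₂ * (2 * C₁ * τ₁ ^ k)) := hbd _ hεpos
    _ = ENNReal.ofReal (2 * C₁ * C₂ * τ₁ ^ k) := by ring_nf
end

section
/- Let τ′ > 0, C > 0, θ₁ ∈ (0,1), δ > 0, and let (k_n) be a sequence of positive integers with k_n → ∞. Suppose (a_{n,j})_{n,j ≥ 1} are nonnegative reals and (m_n) nonnegative reals such that m_n ≤ τ′/n for all n, and |a_{n,j} − m_n²| ≤ C(n^{−2} + n² θ₁^{⌊j/2⌋}) whenever j ≥ (ln n)^{1+δ}. Then lim_{n→∞} n · ∑_{j = ⌈(ln n)^{1+δ}⌉}^{⌊n/k_n⌋} a_{n,j} = 0. -/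
/-!
Each term with `j ≥ J := ⌈(ln n)^{1+δ}⌉` is at most `(τ'² + C)/n² + C n² θ₁^{⌊J/2⌋}`, and there
are at most `n/k_n` of them, so `n · ∑ a_{n,j} ≤ (τ'² + C)/k_n + C n⁴ θ₁^{⌊J/2⌋}`. The first term
vanishes since `k_n → ∞`; the second because `θ₁^{J/2} ≈ exp(-c (ln n)^{1+δ})` beats any power of
`n = exp(ln n)`.
-/

open Filter Topology

lemma tendsto_mul_add_mul_rpow_atBot {p c δ : ℝ} (hc : c < 0) (hδ : 0 < δ) :
    Tendsto (fun L : ℝ => p * L + c * L ^ (1 + δ)) atTop atBot := by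
  have hfactor : Tendsto (fun L : ℝ => L * (p + c * L ^ δ)) atTop atBot :=
    tendsto_id.atTop_mul_atBot₀ <|
      tendsto_atBot_add_const_left _ p ((tendsto_rpow_atTop hδ).const_mul_atTop_of_neg hc)
  refine hfactor.congr' ?_
  filter_upwards [eventually_gt_atTop 0] with L hL
  rw [Real.rpow_add hL, Real.rpow_one]
  ring

lemma pow_natCeil_div_two_le_rpow {θ : ℝ} (hθ0 : 0 < θ) (hθ1 : θ ≤ 1) (x : ℝ) :
    θ ^ (⌈x⌉₊ / 2) ≤ θ ^ ((x - 1) / 2) := by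
  rw [← Real.rpow_natCast]
  refine Real.rpow_le_rpow_of_exponent_ge hθ0 hθ1 ?_
  have hceil : x ≤ ⌈x⌉₊ := Nat.le_ceil x
  have hdiv : (⌈x⌉₊ : ℝ) ≤ 2 * (⌈x⌉₊ / 2 : ℕ) + 1 := by
    exact_mod_cast (by omega : ⌈x⌉₊ ≤ 2 * (⌈x⌉₊ / 2) + 1)
  linarith

lemma tendsto_pow_mul_pow_natCeil_log_rpow {θ δ : ℝ} (hθ0 : 0 < θ) (hθ1 : θ < 1)
    (hδ : 0 < δ) (p : ℕ) :
    Tendsto (fun n : ℕ => (n : ℝ) ^ p * θ ^ (⌈Real.log n ^ (1 + δ)⌉₊ / 2)) atTop (𝓝 0) := by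
  set c := Real.log θ / 2
  have hc : c < 0 := div_neg_of_neg_of_pos (Real.log_neg hθ0 hθ1) two_pos
  have hexponent : Tendsto (fun n : ℕ => p * Real.log n + c * Real.log n ^ (1 + δ) - c)
      atTop atBot :=
    tendsto_atBot_add_const_right _ _ <|
      (tendsto_mul_add_mul_rpow_atBot hc hδ).comp
        (Real.tendsto_log_atTop.comp tendsto_natCast_atTop_atTop)
  refine squeeze_zero' (Eventually.of_forall fun n => by positivity) ?_
    (Real.tendsto_exp_atBot.comp hexponent)
  filter_upwards [eventually_gt_atTop 0] with n hn
  have hn' : (0 : ℝ) < n := by exact_mod_cast hn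
  calc (n : ℝ) ^ p * θ ^ (⌈Real.log n ^ (1 + δ)⌉₊ / 2)
      ≤ n ^ p * θ ^ ((Real.log n ^ (1 + δ) - 1) / 2) := by
        gcongr; exact pow_natCeil_div_two_le_rpow hθ0 hθ1.le _
    _ = Real.exp (p * Real.log n + c * Real.log n ^ (1 + δ) - c) := by
        rw [Real.rpow_def_of_pos hθ0, ← Real.exp_log (pow_pos hn' p), ← Real.exp_add,
          Real.log_pow]
        congr 1
        ring

lemma sum_Icc_le_mul_of_le {b : ℕ → ℝ} {J M : ℕ} {B : ℝ} (hJ : 1 ≤ J) (hB : 0 ≤ B)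
    (hb : ∀ j ∈ Finset.Icc J M, b j ≤ B) : ∑ j ∈ Finset.Icc J M, b j ≤ M * B := by
  have hcard : (Finset.Icc J M).card ≤ M := by simp only [Nat.card_Icc]; omega
  calc ∑ j ∈ Finset.Icc J M, b j ≤ (Finset.Icc J M).card * B := by
        simpa using Finset.sum_le_card_nsmul _ _ _ hb
    _ ≤ M * B := by gcongr

lemma natCast_mul_div_mul_le (n k : ℕ) {A C D : ℝ} (hA : 0 ≤ A) (hC : 0 ≤ C) (hD : 0 ≤ D) :
    (n : ℝ) * (n / k : ℕ) * (A / n ^ 2 + C * (n ^ 2 * D)) ≤ A / k + C * (n ^ 4 * D) := by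
  rcases n.eq_zero_or_pos with rfl | hn
  · simp only [CharP.cast_eq_zero, zero_mul]; positivity
  have hn' : (0 : ℝ) < n := by exact_mod_cast hn
  have hdiv : ((n / k : ℕ) : ℝ) ≤ n / k := Nat.cast_div_le
  have hdiv' : ((n / k : ℕ) : ℝ) ≤ n := by exact_mod_cast Nat.div_le_self n k
  calc (n : ℝ) * (n / k : ℕ) * (A / n ^ 2 + C * (n ^ 2 * D))
      = (n / k : ℕ) * (A / n) + C * (n ^ 3 * D) * (n / k : ℕ) := by field_simp
    _ ≤ n / k * (A / n) + C * (n ^ 3 * D) * n := by gcongr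
    _ = A / k + C * (n ^ 4 * D) := by field_simp

lemma le_of_abs_sub_sq_le {a m τ C θ : ℝ} {n j J : ℕ} (hC : 0 ≤ C) (hθ0 : 0 ≤ θ)
    (hθ1 : θ ≤ 1) (hm0 : 0 ≤ m) (hm : m ≤ τ / n) (hJj : J ≤ j)
    (h : |a - m ^ 2| ≤ C * ((n : ℝ)⁻¹ ^ 2 + n ^ 2 * θ ^ (j / 2))) :
    a ≤ (τ ^ 2 + C) / n ^ 2 + C * (n ^ 2 * θ ^ (J / 2)) := by
  have hθ : θ ^ (j / 2) ≤ θ ^ (J / 2) := pow_le_pow_of_le_one hθ0 hθ1 (Nat.div_le_div_right hJj)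
  have hmsq : m ^ 2 ≤ τ ^ 2 / n ^ 2 := by
    rw [← div_pow]; exact pow_le_pow_left₀ hm0 hm 2
  calc a ≤ m ^ 2 + C * ((n : ℝ)⁻¹ ^ 2 + n ^ 2 * θ ^ (j / 2)) := by linarith [(abs_le.mp h).2]
    _ ≤ τ ^ 2 / n ^ 2 + C * ((n : ℝ)⁻¹ ^ 2 + n ^ 2 * θ ^ (J / 2)) := by gcongr
    _ = (τ ^ 2 + C) / n ^ 2 + C * (n ^ 2 * θ ^ (J / 2)) := by field_simp; ring

theorem stmt6_general (τ' C θ₁ δ : ℝ) (hC : 0 < C)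
    (hθ₁ : θ₁ ∈ Set.Ioo (0 : ℝ) 1) (hδ : 0 < δ)
    (k : ℕ → ℕ) (hk : Tendsto k atTop atTop)
    (a : ℕ → ℕ → ℝ) (ha0 : ∀ n j, 0 ≤ a n j)
    (m : ℕ → ℝ) (hm0 : ∀ n, 0 ≤ m n) (hm : ∀ n, 1 ≤ n → m n ≤ τ' / n)
    (hbound : ∀ n j : ℕ, 1 ≤ n → (Real.log n) ^ (1 + δ) ≤ (j : ℝ) →
      |a n j - (m n) ^ 2| ≤ C * ((n : ℝ)⁻¹ ^ 2 + (n : ℝ) ^ 2 * θ₁ ^ (j / 2))) :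
    Tendsto (fun n : ℕ =>
        (n : ℝ) * ∑ j ∈ Finset.Icc ⌈(Real.log n) ^ (1 + δ)⌉₊ (n / k n), a n j)
      atTop (nhds 0) := by
  obtain ⟨hθ0, hθ1⟩ := hθ₁
  have hlim : Tendsto (fun n : ℕ => (τ' ^ 2 + C) / k n +
      C * ((n : ℝ) ^ 4 * θ₁ ^ (⌈Real.log n ^ (1 + δ)⌉₊ / 2))) atTop (𝓝 0) := by
    simpa using (tendsto_const_nhds.div_atTop (tendsto_natCast_atTop_atTop.comp hk)).add
      ((tendsto_pow_mul_pow_natCeil_log_rpow hθ0 hθ1 hδ 4).const_mul C)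
  refine squeeze_zero' (Eventually.of_forall fun n =>
    mul_nonneg n.cast_nonneg (Finset.sum_nonneg fun j _ => ha0 n j)) ?_ hlim
  filter_upwards [eventually_ge_atTop 2] with n hn
  set J := ⌈Real.log n ^ (1 + δ)⌉₊
  have hn' : (1 : ℝ) < n := by exact_mod_cast hn
  have hJ : 1 ≤ J := Nat.one_le_ceil_iff.mpr (Real.rpow_pos_of_pos (Real.log_pos hn') _)
  have hterm : ∀ j ∈ Finset.Icc J (n / k n),
      a n j ≤ (τ' ^ 2 + C) / n ^ 2 + C * (n ^ 2 * θ₁ ^ (J / 2)) := fun j hj =>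
    have hJj := (Finset.mem_Icc.mp hj).1
    le_of_abs_sub_sq_le hC.le hθ0.le hθ1.le (hm0 n) (hm n (by omega)) hJj
      (hbound n j (by omega) ((Nat.le_ceil _).trans (by exact_mod_cast hJj)))
  calc (n : ℝ) * ∑ j ∈ Finset.Icc J (n / k n), a n j
      ≤ n * ((n / k n : ℕ) * ((τ' ^ 2 + C) / n ^ 2 + C * (n ^ 2 * θ₁ ^ (J / 2)))) := by
        gcongr
        exact sum_Icc_le_mul_of_le hJ (by positivity) hterm
    _ ≤ (τ' ^ 2 + C) / k n + C * (n ^ 4 * θ₁ ^ (J / 2)) := by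
        rw [← mul_assoc]
        exact natCast_mul_div_mul_le n (k n) (by positivity) hC.le (by positivity)

/-- The part of condition `D'_q(u_n)` covering return times `j` between `(ln n)^{1+δ}`
and `n/k_n`, derived from the decorrelation bound of condition `D_q(u_n)`. -/
theorem stmt6 (τ' C θ₁ δ : ℝ) (hτ' : 0 < τ') (hC : 0 < C)
    (hθ₁ : θ₁ ∈ Set.Ioo (0 : ℝ) 1) (hδ : 0 < δ)
    (k : ℕ → ℕ) (hkpos : ∀ n, 0 < k n) (hk : Tendsto k atTop atTop)
    (a : ℕ → ℕ → ℝ) (ha0 : ∀ n j, 0 ≤ a n j)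
    (m : ℕ → ℝ) (hm0 : ∀ n, 0 ≤ m n) (hm : ∀ n, 1 ≤ n → m n ≤ τ' / n)
    (hbound : ∀ n j : ℕ, 1 ≤ n → (Real.log n) ^ (1 + δ) ≤ (j : ℝ) →
      |a n j - (m n) ^ 2| ≤ C * ((n : ℝ)⁻¹ ^ 2 + (n : ℝ) ^ 2 * θ₁ ^ (j / 2))) :
    Tendsto (fun n : ℕ =>
        (n : ℝ) * ∑ j ∈ Finset.Icc ⌈(Real.log n) ^ (1 + δ)⌉₊ (n / k n), a n j)
      atTop (nhds 0) :=
  stmt6_general τ' C θ₁ δ hC hθ₁ hδ k hk a ha0 m hm0 hm hbound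
end

section
/- Let λ, μ₀ ∈ ℝ with |λ| > 1 and |μ₀| ≤ 1, and let L : ℝ² → ℝ² be the linear hyperbolic map L(x,y) = (λx, μ₀y). Equip ℝ² with the maximum metric d((x,y),(x′,y′)) = max(|x−x′|, |y−y′|). Fix ε > 0 and let A = {z ∈ ℝ² : d(z,0) < ε and d(Lz,0) ≥ ε}. Then for every j ≥ 1 and every z ∈ A, L^j z ∉ A; equivalently A ∩ L^{−j}(A) = ∅ for all j ≥ 1. -/
/-- Absence of returns: for the linear hyperbolic map `L(x,y) = (λx, μ₀y)` with
`|λ| > 1`, `|μ₀| ≤ 1`, and the max metric, points of the escape annulus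
`A = {d(z,0) < ε, d(Lz,0) ≥ ε}` never return to `A`. -/
theorem stmt8 (lam mu : ℝ) (hlam : 1 < |lam|) (hmu : |mu| ≤ 1)
    (L : ℝ × ℝ → ℝ × ℝ) (hL : ∀ p, L p = (lam * p.1, mu * p.2))
    (ε : ℝ) (hε : 0 < ε)
    (A : Set (ℝ × ℝ)) (hA : A = {z | dist z 0 < ε ∧ ε ≤ dist (L z) 0}) :
    (∀ j : ℕ, 1 ≤ j → ∀ z ∈ A, L^[j] z ∉ A) ∧
    (∀ j : ℕ, 1 ≤ j → A ∩ L^[j] ⁻¹' A = ∅) := by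
  have hiter : ∀ (j : ℕ) (z : ℝ × ℝ), L^[j] z = (lam ^ j * z.1, mu ^ j * z.2) := by
    intro j
    induction j with
    | zero => intro z; simp
    | succ n ih =>
      intro z
      rw [Function.iterate_succ_apply', ih, hL]
      simp [pow_succ]
      constructor <;> ring
  have hdist : ∀ z : ℝ × ℝ, dist z 0 = max |z.1| |z.2| := by
    intro z
    rw [Prod.dist_eq]
    simp [Real.dist_eq]
  have key : ∀ j : ℕ, 1 ≤ j → ∀ z ∈ A, L^[j] z ∉ A := by
    intro j hj z hz hmem
    rw [hA] at hz hmem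
    obtain ⟨h1, h2⟩ := hz
    obtain ⟨h3, _⟩ := hmem
    rw [hdist] at h1 h3
    rw [hL, hdist] at h2
    -- |mu * z.2| < ε since |mu| ≤ 1 and |z.2| < ε
    have hy : |z.2| < ε := lt_of_le_of_lt (le_max_right _ _) h1
    have hmy : |mu * z.2| < ε := by
      rw [abs_mul]
      calc |mu| * |z.2| ≤ 1 * |z.2| := by
            exact mul_le_mul_of_nonneg_right hmu (abs_nonneg _)
        _ = |z.2| := one_mul _
        _ < ε := hy
    have hx : ε ≤ |lam * z.1| := by
      rcases max_cases |lam * z.1| |mu * z.2| with ⟨he, _⟩ | ⟨he, _⟩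
      · rw [he] at h2; exact h2
      · rw [he] at h2; exact absurd (lt_of_le_of_lt h2 hmy) (lt_irrefl _)
    -- |lam^j * z.1| ≥ |lam * z.1| ≥ ε
    have hlam1 : (1:ℝ) ≤ |lam| := le_of_lt hlam
    have hpow : |lam * z.1| ≤ |lam ^ j * z.1| := by
      rw [abs_mul, abs_mul, abs_pow]
      apply mul_le_mul_of_nonneg_right _ (abs_nonneg _)
      calc |lam| = |lam| ^ 1 := (pow_one _).symm
        _ ≤ |lam| ^ j := pow_le_pow_right₀ hlam1 hj
    have : ε ≤ |lam ^ j * z.1| := le_trans hx hpow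
    have : ε ≤ max |lam ^ j * z.1| |mu ^ j * z.2| :=
      le_trans this (le_max_left _ _)
    rw [hiter] at h3
    simp only at h3
    exact absurd (lt_of_le_of_lt this h3) (lt_irrefl _)
  refine ⟨key, fun j hj => ?_⟩
  ext z
  simp only [Set.mem_inter_iff, Set.mem_preimage, Set.mem_empty_iff_false, iff_false, not_and]
  intro hz
  exact key j hj z hz
end

section
/- Let τ′ > 0, η > 0, C > 0, C_z > 0, ϑ ∈ (0,1), θ₁ ∈ (0,1), δ > 0, and let (k_n) be a sequence of positive integers with k_n → ∞. Suppose (a_{n,j})_{n,j ≥ 1} are nonnegative reals and (m_n) nonnegative reals with m_n ≤ τ′/n, satisfying the three regime bounds for all sufficiently large n: (i) a_{n,j} = 0 for all 1 ≤ j ≤ η ln n; (ii) a_{n,j} ≤ (τ′/n)(C ϑ^{j} n^{1/2} + C_z) n^{−1/2} for all η ln n < j ≤ (ln n)^{1+δ}; (iii) |a_{n,j} − m_n²| ≤ C(n^{−2} + n² θ₁^{⌊j/2⌋}) for all j > (ln n)^{1+δ}. Then lim_{n→∞} n · ∑_{j=1}^{⌊n/k_n⌋} a_{n,j} = 0. 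-/
/-!
Split the sum at `L n = (log n) ^ (1 + δ)`. Below `L n` each term vanishes or is at most
`(τ' / n) (C ϑ ^ (η log n) + Cz n ^ (-1/2))`, and `ϑ ^ (η log n) = n ^ (η log ϑ)` is a negative
power of `n`; so these at most `L n` terms, multiplied by `n`, are `O((log n) ^ (1 + δ) n ^ (-c))`.
Above `L n` each term is at most `m n ^ 2 + C n⁻² + C n² θ₁ ^ ⌊j/2⌋ ≤ (τ' ^ 2 + C) / n ^ 2 +
O(n ^ 2 √θ₁ ^ L n)`, and there are at most `n / k n` of them, which gives
`(τ' ^ 2 + C) / k n + O(n ^ 4 √θ₁ ^ (log n) ^ (1 + δ))`; the last term tends to `0` because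
`1 + δ > 1`.
-/

open Filter Topology Real Finset

theorem tendsto_log_rpow_mul_rpow_nhds_zero (p : ℝ) {s : ℝ} (hs : s < 0) :
    Tendsto (fun x : ℝ => log x ^ p * x ^ s) atTop (𝓝 0) := by
  refine ((isLittleO_log_rpow_rpow_atTop p (neg_pos.2 hs)).tendsto_div_nhds_zero).congr' ?_
  filter_upwards [eventually_gt_atTop 0] with x hx
  rw [rpow_neg hx.le, div_eq_mul_inv, inv_inv]

theorem tendsto_rpow_mul_rpow_log_rpow_nhds_zero (d : ℝ) {θ q : ℝ} (hθ0 : 0 < θ) (hθ1 : θ < 1)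
    (hq : 1 < q) : Tendsto (fun x : ℝ => x ^ d * θ ^ (log x ^ q)) atTop (𝓝 0) := by
  have hexponent : Tendsto (fun y : ℝ => d * y + log θ * y ^ q) atTop atBot := by
    have hlin : Tendsto (fun y : ℝ => y * (d + log θ * y ^ (q - 1))) atTop atBot :=
      tendsto_id.atTop_mul_atBot₀ <| tendsto_atBot_add_const_left _ d <|
        (tendsto_const_mul_atBot_of_neg (log_neg hθ0 hθ1)).2 (tendsto_rpow_atTop (by linarith))
    refine hlin.congr' ?_
    filter_upwards [eventually_gt_atTop 0] with y hy
    rw [mul_add, mul_left_comm, ← rpow_one_add' hy.le (by linarith)]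
    ring_nf
  refine (tendsto_exp_atBot.comp (hexponent.comp tendsto_log_atTop)).congr' ?_
  filter_upwards [eventually_gt_atTop 0] with x hx
  rw [Function.comp_apply, Function.comp_apply, exp_add, rpow_def_of_pos hx, rpow_def_of_pos hθ0,
    mul_comm d]

theorem sum_Icc_le_mul_add_mul {f : ℕ → ℝ} (M : ℕ) {L u v : ℝ} (hL : 0 ≤ L) (hu : 0 ≤ u)
    (hv : 0 ≤ v) (hshort : ∀ j : ℕ, 1 ≤ j → (j : ℝ) ≤ L → f j ≤ u)
    (hlong : ∀ j : ℕ, L < j → f j ≤ v) :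
    ∑ j ∈ Icc 1 M, f j ≤ L * u + M * v := by
  rw [← sum_filter_add_sum_filter_not (Icc 1 M) (fun j : ℕ => (j : ℝ) ≤ L)]
  gcongr
  · have hcard : ((#{j ∈ Icc 1 M | ((j : ℕ) : ℝ) ≤ L} : ℕ) : ℝ) ≤ L := by
      refine le_trans ?_ (Nat.floor_le hL)
      refine Nat.cast_le.2 (le_trans (card_le_card fun j hj => ?_) (Nat.card_Icc 1 ⌊L⌋₊).le)
      simp only [mem_filter, mem_Icc] at hj ⊢
      exact ⟨hj.1.1, Nat.le_floor hj.2⟩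
    refine (sum_le_card_nsmul _ _ u fun j hj => ?_).trans ?_
    · simp only [mem_filter, mem_Icc] at hj
      exact hshort j hj.1.1 hj.2
    · rw [nsmul_eq_mul]
      exact mul_le_mul_of_nonneg_right hcard hu
  · refine (sum_le_card_nsmul _ _ v fun j hj => ?_).trans ?_
    · simp only [mem_filter, not_le] at hj
      exact hlong j hj.2
    · rw [nsmul_eq_mul]
      refine mul_le_mul_of_nonneg_right ?_ hv
      exact_mod_cast (card_filter_le _ _).trans (Nat.card_Icc 1 M).le

theorem short_block_le {x τ' η C Cz ϑ L : ℝ} {b : ℕ → ℝ} (hx : 0 < x) (hτ' : 0 ≤ τ')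
    (hC : 0 ≤ C) (hCz : 0 ≤ Cz) (hϑ0 : 0 < ϑ) (hϑ1 : ϑ ≤ 1)
    (hzero : ∀ j : ℕ, 1 ≤ j → (j : ℝ) ≤ η * log x → b j = 0)
    (hgrowth : ∀ j : ℕ, η * log x < j → (j : ℝ) ≤ L →
      b j ≤ (τ' / x) * (C * ϑ ^ j * x ^ ((1 : ℝ) / 2) + Cz) * x ^ (-(1 : ℝ) / 2))
    (j : ℕ) (hj : 1 ≤ j) (hjL : (j : ℝ) ≤ L) :
    b j ≤ τ' * (C * x ^ (η * log ϑ) + Cz * x ^ (-(1 : ℝ) / 2)) / x := by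
  rcases le_or_gt (j : ℝ) (η * log x) with hjshort | hjlong
  · rw [hzero j hj hjshort]
    positivity
  · have hpow : ϑ ^ j ≤ x ^ (η * log ϑ) := by
      have hswap : x ^ (η * log ϑ) = ϑ ^ (η * log x) := by
        rw [rpow_def_of_pos hx, rpow_def_of_pos hϑ0]; ring_nf
      rw [hswap, ← rpow_natCast]
      exact rpow_le_rpow_of_exponent_ge hϑ0 hϑ1 hjlong.le
    have hhalf : x ^ ((1 : ℝ) / 2) * x ^ (-(1 : ℝ) / 2) = 1 := by
      rw [← rpow_add hx]; norm_num
    calc b j ≤ (τ' / x) * (C * ϑ ^ j * x ^ ((1 : ℝ) / 2) + Cz) * x ^ (-(1 : ℝ) / 2) :=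
          hgrowth j hjlong hjL
      _ = τ' * (C * ϑ ^ j + Cz * x ^ (-(1 : ℝ) / 2)) / x := by
          linear_combination (τ' / x * C * ϑ ^ j) * hhalf
      _ ≤ τ' * (C * x ^ (η * log ϑ) + Cz * x ^ (-(1 : ℝ) / 2)) / x := by gcongr

theorem pow_div_two_mul_sqrt_le_sqrt_rpow {θ L : ℝ} {j : ℕ} (hθ0 : 0 < θ) (hθ1 : θ ≤ 1)
    (hj : L ≤ j) : θ ^ (j / 2) * √θ ≤ √θ ^ L := by
  have hs0 : 0 < √θ := sqrt_pos.2 hθ0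
  have hs1 : √θ ≤ 1 := sqrt_le_one.2 hθ1
  calc θ ^ (j / 2) * √θ = √θ ^ (2 * (j / 2) + 1) := by
        rw [pow_succ, pow_mul, sq_sqrt hθ0.le]
    _ ≤ √θ ^ j := pow_le_pow_of_le_one hs0.le hs1 (by omega)
    _ = √θ ^ (j : ℝ) := (rpow_natCast _ _).symm
    _ ≤ √θ ^ L := rpow_le_rpow_of_exponent_ge hs0 hs1 hj

theorem long_block_le {x τ' C θ m L : ℝ} {b : ℕ → ℝ} (hC : 0 ≤ C) (hθ0 : 0 < θ) (hθ1 : θ ≤ 1)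
    (hm0 : 0 ≤ m) (hm : m ≤ τ' / x)
    (hdecay : ∀ j : ℕ, L < j → |b j - m ^ 2| ≤ C * (x⁻¹ ^ 2 + x ^ 2 * θ ^ (j / 2)))
    (j : ℕ) (hj : L < j) :
    b j ≤ (τ' ^ 2 + C) / x ^ 2 + C / √θ * x ^ 2 * √θ ^ L := by
  have hm2 : m ^ 2 ≤ (τ' / x) ^ 2 := pow_le_pow_left₀ hm0 hm 2
  have hθj : θ ^ (j / 2) ≤ √θ ^ L / √θ :=
    (le_div_iff₀ (sqrt_pos.2 hθ0)).2 (pow_div_two_mul_sqrt_le_sqrt_rpow hθ0 hθ1 hj.le)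
  have hdev := (abs_le.1 (hdecay j hj)).2
  calc b j ≤ m ^ 2 + C * (x⁻¹ ^ 2 + x ^ 2 * θ ^ (j / 2)) := by linarith
    _ ≤ (τ' / x) ^ 2 + C * (x⁻¹ ^ 2 + x ^ 2 * (√θ ^ L / √θ)) := by gcongr
    _ = (τ' ^ 2 + C) / x ^ 2 + C / √θ * x ^ 2 * √θ ^ L := by ring

theorem natCast_mul_blocks_le {n : ℕ} (k : ℕ) (hn : 0 < n) {L P A B w : ℝ} (hA : 0 ≤ A)
    (hB : 0 ≤ B) (hw : 0 ≤ w) :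
    (n : ℝ) * (L * (P / n) + (n / k : ℕ) * (A / n ^ 2 + B * n ^ 2 * w)) ≤
      L * P + A / k + B * (n ^ 4 * w) := by
  have hn' : (0 : ℝ) < n := Nat.cast_pos.2 hn
  have hMk : ((n / k : ℕ) : ℝ) / n ≤ 1 / k := by
    rw [div_le_iff₀ hn', one_div_mul_eq_div]
    exact Nat.cast_div_le
  have hMn : ((n / k : ℕ) : ℝ) ≤ n := Nat.cast_le.2 (Nat.div_le_self n k)
  calc (n : ℝ) * (L * (P / n) + (n / k : ℕ) * (A / n ^ 2 + B * n ^ 2 * w))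
      = L * P + A * (((n / k : ℕ) : ℝ) / n) + B * (n ^ 3 * (n / k : ℕ) * w) := by
        field_simp
        ring
    _ ≤ L * P + A * (1 / k) + B * (n ^ 3 * n * w) := by gcongr
    _ = L * P + A / k + B * (n ^ 4 * w) := by ring

theorem tendsto_blocks_bound {τ' C Cz s q ρ A B : ℝ} {k : ℕ → ℕ} (hk : Tendsto k atTop atTop)
    (hs : s < 0) (hq : 1 < q) (hρ0 : 0 < ρ) (hρ1 : ρ < 1) :
    Tendsto (fun n : ℕ => log n ^ q * (τ' * (C * n ^ s + Cz * n ^ (-1 / 2 : ℝ))) + A / k n +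
      B * (n ^ 4 * ρ ^ log n ^ q)) atTop (𝓝 0) := by
  have hshort (s : ℝ) (hs : s < 0) := (tendsto_log_rpow_mul_rpow_nhds_zero q hs).comp
    tendsto_natCast_atTop_atTop
  have hmiddle := tendsto_const_nhds (x := A) |>.div_atTop (tendsto_natCast_atTop_atTop.comp hk)
  have hlong := (tendsto_rpow_mul_rpow_log_rpow_nhds_zero 4 hρ0 hρ1 hq).comp
    tendsto_natCast_atTop_atTop
  have hsum := ((((hshort s hs).const_mul C).add
    ((hshort (-1 / 2) (by norm_num)).const_mul Cz)).const_mul τ').add hmiddle |>.add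
    (hlong.const_mul B)
  simp only [mul_zero, add_zero] at hsum
  refine hsum.congr fun n => ?_
  simp only [Function.comp_apply, rpow_ofNat]
  ring

theorem stmt14_general (τ' η C Cz ϑ θ₁ δ : ℝ)
    (hτ' : 0 < τ') (hη : 0 < η) (hC : 0 < C) (hCz : 0 < Cz)
    (hϑ : ϑ ∈ Set.Ioo (0 : ℝ) 1) (hθ₁ : θ₁ ∈ Set.Ioo (0 : ℝ) 1) (hδ : 0 < δ)
    (k : ℕ → ℕ) (hk : Tendsto k atTop atTop)
    (a : ℕ → ℕ → ℝ) (ha0 : ∀ n j, 0 ≤ a n j)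
    (m : ℕ → ℝ) (hm0 : ∀ n, 0 ≤ m n) (hm : ∀ n : ℕ, 1 ≤ n → m n ≤ τ' / n)
    (hregimes : ∃ N : ℕ, ∀ n : ℕ, N ≤ n →
      (∀ j : ℕ, 1 ≤ j → (j : ℝ) ≤ η * Real.log n → a n j = 0) ∧
      (∀ j : ℕ, η * Real.log n < (j : ℝ) → (j : ℝ) ≤ (Real.log n) ^ (1 + δ) →
        a n j ≤ (τ' / n) * (C * ϑ ^ j * (n : ℝ) ^ ((1 : ℝ) / 2) + Cz) *
          (n : ℝ) ^ (-(1 : ℝ) / 2)) ∧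
      (∀ j : ℕ, (Real.log n) ^ (1 + δ) < (j : ℝ) →
        |a n j - (m n) ^ 2| ≤ C * ((n : ℝ)⁻¹ ^ 2 + (n : ℝ) ^ 2 * θ₁ ^ (j / 2)))) :
    Tendsto (fun n : ℕ => (n : ℝ) * ∑ j ∈ Finset.Icc 1 (n / k n), a n j)
      atTop (nhds 0) := by
  obtain ⟨hϑ0, hϑ1⟩ := hϑ
  obtain ⟨hθ0, hθ1⟩ := hθ₁
  obtain ⟨N, hN⟩ := hregimes
  have hs : η * log ϑ < 0 := mul_neg_of_pos_of_neg hη (log_neg hϑ0 hϑ1)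
  have hsqrtθ₁ : √θ₁ < 1 := (sqrt_lt' one_pos).2 (by rwa [one_pow])
  refine squeeze_zero' (Eventually.of_forall fun n => ?_) ?_ (tendsto_blocks_bound
    (τ' := τ') (C := C) (Cz := Cz) (A := τ' ^ 2 + C) (B := C / √θ₁) hk hs
    (by linarith : 1 < 1 + δ) (sqrt_pos.2 hθ0) hsqrtθ₁)
  · exact mul_nonneg n.cast_nonneg (sum_nonneg fun j _ => ha0 n j)
  filter_upwards [eventually_ge_atTop N, eventually_gt_atTop 0] with n hnN hn
  obtain ⟨hzero, hgrowth, hdecay⟩ := hN n hnN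
  have hn' : (0 : ℝ) < n := Nat.cast_pos.2 hn
  have hsum := sum_Icc_le_mul_add_mul (n / k n) (rpow_nonneg (log_natCast_nonneg n) (1 + δ))
    (by positivity) (by positivity)
    (short_block_le hn' hτ'.le hC.le hCz.le hϑ0 hϑ1.le hzero hgrowth)
    (long_block_le hC.le hθ0 hθ1.le (hm0 n) (hm n hn) hdecay)
  exact (mul_le_mul_of_nonneg_left hsum hn'.le).trans
    (natCast_mul_blocks_le (k n) hn (by positivity) (by positivity) (by positivity))

/-- Condition `D'_q(u_n)` from the three regime bounds: no short returns up to `η ln n`,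
the growth lemma bound up to `(ln n)^{1+δ}`, and decay of correlations beyond. -/
theorem stmt14 (τ' η C Cz ϑ θ₁ δ : ℝ)
    (hτ' : 0 < τ') (hη : 0 < η) (hC : 0 < C) (hCz : 0 < Cz)
    (hϑ : ϑ ∈ Set.Ioo (0 : ℝ) 1) (hθ₁ : θ₁ ∈ Set.Ioo (0 : ℝ) 1) (hδ : 0 < δ)
    (k : ℕ → ℕ) (hkpos : ∀ n, 0 < k n) (hk : Tendsto k atTop atTop)
    (a : ℕ → ℕ → ℝ) (ha0 : ∀ n j, 0 ≤ a n j)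
    (m : ℕ → ℝ) (hm0 : ∀ n, 0 ≤ m n) (hm : ∀ n : ℕ, 1 ≤ n → m n ≤ τ' / n)
    (hregimes : ∃ N : ℕ, ∀ n : ℕ, N ≤ n →
      (∀ j : ℕ, 1 ≤ j → (j : ℝ) ≤ η * Real.log n → a n j = 0) ∧
      (∀ j : ℕ, η * Real.log n < (j : ℝ) → (j : ℝ) ≤ (Real.log n) ^ (1 + δ) →
        a n j ≤ (τ' / n) * (C * ϑ ^ j * (n : ℝ) ^ ((1 : ℝ) / 2) + Cz) *
          (n : ℝ) ^ (-(1 : ℝ) / 2)) ∧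
      (∀ j : ℕ, (Real.log n) ^ (1 + δ) < (j : ℝ) →
        |a n j - (m n) ^ 2| ≤ C * ((n : ℝ)⁻¹ ^ 2 + (n : ℝ) ^ 2 * θ₁ ^ (j / 2)))) :
    Tendsto (fun n : ℕ => (n : ℝ) * ∑ j ∈ Finset.Icc 1 (n / k n), a n j)
      atTop (nhds 0) :=
  stmt14_general τ' η C Cz ϑ θ₁ δ hτ' hη hC hCz hϑ hθ₁ hδ k hk a ha0 m hm0 hm hregimes
end
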